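/- arXiv:2504.01753 — 3 statements merged into one kernel-verified Lean document; each statement's English description precedes it below -/
import Mathlib

section
/- Let V be a finite-dimensional real vector space and let G be a subgroup of GL(V) acting with finite orbits (i.e. every G-orbit in V is finite). Then the invariant subspace V^G = {v ∈ V | ∀ g ∈ G, g v = v} admits a G-invariant linear complement S ⊆ V, i.e. V = V^G ⊕ S and g(S) = S for all g ∈ G. -/
/-- The subspace of vectors fixed by every element of a subgroup `G` of `GL(V)`. -/
def fixedSubmodule {V : Type*} [AddCommGroup V] [Module ℝ V]
    (G : Subgroup (V ≃ₗ[ℝ] V)) : Submodule ℝ V where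
  carrier := {v | ∀ g ∈ G, g v = v}
  add_mem' := by
    intro a b ha hb g hg
    simp [map_add, ha g hg, hb g hg]
  zero_mem' := by
    intro g hg
    simp
  smul_mem' := by
    intro c a ha g hg
    simp [map_smul, ha g hg]

/-- If `G ≤ GL(V)` acts with finite orbits on a finite-dimensional real vector space `V`,
then the invariant subspace `V^G` admits a `G`-invariant linear complement. -/
theorem stmt0 {V : Type*} [AddCommGroup V] [Module ℝ V] [FiniteDimensional ℝ V]
    (G : Subgroup (V ≃ₗ[ℝ] V))
    (hfin : ∀ v : V, (Set.range fun g : G => (g : V ≃ₗ[ℝ] V) v).Finite) :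
    ∃ S : Submodule ℝ V, IsCompl (fixedSubmodule G) S ∧
      ∀ g ∈ G, ∀ s ∈ S, g s ∈ S := by
  classical
  -- Step 1: G is finite, since an element is determined by its action on a basis
  -- and each basis vector has a finite orbit.
  obtain ⟨ι, b⟩ := Module.Free.exists_basis (R := ℝ) (M := V)
  haveI : Finite ι := Module.Finite.finite_basis b
  have hFG : Finite G := by
    let F : G → (ι → V) := fun g i => (g : V ≃ₗ[ℝ] V) (b i)
    have hFinj : Function.Injective F := by
      intro g g' h
      have : (g : V ≃ₗ[ℝ] V).toLinearMap = (g' : V ≃ₗ[ℝ] V).toLinearMap := by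
        apply b.ext
        intro i
        exact congrFun h i
      have : (g : V ≃ₗ[ℝ] V) = (g' : V ≃ₗ[ℝ] V) := by
        ext v
        exact congrArg (fun (f : V →ₗ[ℝ] V) => f v) this
      exact Subtype.ext this
    have hrange : (Set.range F).Finite := by
      apply Set.Finite.subset (Set.Finite.pi (fun i : ι => hfin (b i)))
      rintro _ ⟨g, rfl⟩ i _
      exact ⟨g, rfl⟩
    haveI := hrange.to_subtype
    exact Finite.of_injective (Set.rangeFactorization F)
      (fun x y h => hFinj (congrArg Subtype.val h))
  haveI : Fintype G := Fintype.ofFinite G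
  -- Step 2: the averaging projection.
  set T : V →ₗ[ℝ] V := ∑ g : G, ((g : V ≃ₗ[ℝ] V) : V →ₗ[ℝ] V) with hT
  have hcard : ((Fintype.card G : ℝ)) ≠ 0 := by
    exact_mod_cast Fintype.card_ne_zero
  set π : V →ₗ[ℝ] V := (Fintype.card G : ℝ)⁻¹ • T with hπ
  -- T is left-invariant:
  have hleft : ∀ g₀ : G, ∀ v : V, (g₀ : V ≃ₗ[ℝ] V) (T v) = T v := by
    intro g₀ v
    calc (g₀ : V ≃ₗ[ℝ] V) (T v) = ∑ g : G, ((g₀ * g : G) : V ≃ₗ[ℝ] V) v := by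
          rw [hT]; simp only [LinearMap.sum_apply, LinearEquiv.coe_coe, map_sum]; rfl
      _ = ∑ g : G, (g : V ≃ₗ[ℝ] V) v := Fintype.sum_bijective (g₀ * ·)
          (Group.mulLeft_bijective g₀) _ _ (fun g => rfl)
      _ = T v := by rw [hT]; simp only [LinearMap.sum_apply, LinearEquiv.coe_coe]
  -- T is right-invariant:
  have hright : ∀ g₀ : G, ∀ v : V, T ((g₀ : V ≃ₗ[ℝ] V) v) = T v := by
    intro g₀ v
    calc T ((g₀ : V ≃ₗ[ℝ] V) v) = ∑ g : G, ((g * g₀ : G) : V ≃ₗ[ℝ] V) v := by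
          rw [hT]; simp only [LinearMap.sum_apply, LinearEquiv.coe_coe]; rfl
      _ = ∑ g : G, (g : V ≃ₗ[ℝ] V) v := Fintype.sum_bijective (· * g₀)
          (Group.mulRight_bijective g₀) _ _ (fun g => rfl)
      _ = T v := by rw [hT]; simp only [LinearMap.sum_apply, LinearEquiv.coe_coe]
  -- π maps into the fixed subspace:
  have hπmem : ∀ v : V, π v ∈ fixedSubmodule G := by
    intro v g hg
    have := hleft ⟨g, hg⟩ v
    simpa [hπ, map_smul] using congrArg (fun w => (Fintype.card G : ℝ)⁻¹ • w) this
  -- π is the identity on the fixed subspace: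
  have hπfix : ∀ v ∈ fixedSubmodule G, π v = v := by
    intro v hv
    have hTv : T v = (Fintype.card G : ℝ) • v := by
      rw [hT]
      simp only [LinearMap.sum_apply, LinearEquiv.coe_coe]
      have : ∀ g : G, (g : V ≃ₗ[ℝ] V) v = v := fun g => hv g g.2
      rw [Finset.sum_congr rfl (fun g _ => this g), Finset.sum_const,
        Finset.card_univ, ← Nat.cast_smul_eq_nsmul ℝ]
    rw [hπ, LinearMap.smul_apply, hTv, inv_smul_smul₀ hcard]
  -- π is right-invariant too:
  have hπright : ∀ g ∈ G, ∀ v : V, π (g v) = π v := by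
    intro g hg v
    have := hright ⟨g, hg⟩ v
    simp only [hπ, LinearMap.smul_apply]
    rw [this]
  refine ⟨LinearMap.ker π, ⟨?_, ?_⟩, ?_⟩
  · -- disjoint
    rw [Submodule.disjoint_def]
    intro v hv hker
    rw [LinearMap.mem_ker] at hker
    rw [← hπfix v hv, hker]
  · -- codisjoint
    rw [codisjoint_iff, eq_top_iff]
    intro v _
    have h1 : π v ∈ fixedSubmodule G := hπmem v
    have h2 : v - π v ∈ LinearMap.ker π := by
      rw [LinearMap.mem_ker, map_sub, hπfix (π v) h1, sub_self]
    exact Submodule.mem_sup.mpr ⟨π v, h1, v - π v, h2, by abel⟩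
  · -- invariance of the kernel
    intro g hg s hs
    rw [LinearMap.mem_ker] at hs ⊢
    rw [hπright g hg s, hs]
end

section
/- Let V be a finite-dimensional real vector space and let G be a subgroup of GL(V) acting with finite orbits. Define p̄ : V → V by p̄(v) = (1/|G·v|) · Σ_{w ∈ G·v} p(w), where p : V → V^G is any linear projection onto the invariant subspace. Then p̄ is a linear map: p̄(v₁+v₂) = p̄(v₁)+p̄(v₂) for all v₁,v₂ ∈ V, and p̄(c·v) = c·p̄(v) for all c ∈ ℝ. -/
open MulAction Finset

section aux
variable {V : Type*} [AddCommGroup V] [Module ℝ V]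
variable (G : Subgroup (V ≃ₗ[ℝ] V)) (p : V →ₗ[ℝ] V)

/-- The function on `G ⧸ H` induced by `g ↦ p (g • v)`, when `H` stabilizes `v`. -/
noncomputable def qf (v : V) (H : Subgroup G) (hH : H ≤ stabilizer G v) :
    G ⧸ H → V := fun q =>
  Quotient.liftOn' q (fun g => p (g • v)) (by
    intro a b h
    have hab : a⁻¹ * b ∈ H := QuotientGroup.leftRel_apply.mp h
    have : (a⁻¹ * b) • v = v := hH hab
    have hb : b • v = a • v := by
      calc b • v = a • ((a⁻¹ * b) • v) := by rw [← mul_smul, mul_inv_cancel_left]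
        _ = a • v := by rw [this]
    simp [hb])

lemma qf_mk (v : V) (H : Subgroup G) (hH : H ≤ stabilizer G v) (g : G) :
    qf G p v H hH (Quotient.mk'' g) = p (g • v) := rfl

lemma avg_eq (v : V) (hv : (orbit G v).Finite) (H : Subgroup G)
    (hH : H ≤ stabilizer G v) [Fintype (G ⧸ H)] [Fintype (G ⧸ stabilizer G v)] :
    ((Fintype.card (G ⧸ H) : ℝ))⁻¹ • ∑ q : G ⧸ H, qf G p v H hH q
      = ((hv.toFinset.card : ℝ))⁻¹ • ∑ w ∈ hv.toFinset, p w := by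
  set K := stabilizer G v with hK
  let e := Subgroup.quotientEquivProdOfLE hH
  haveI : Finite ((G ⧸ K) × (K ⧸ H.subgroupOf K)) := Finite.of_equiv _ e
  haveI : Finite (K ⧸ H.subgroupOf K) :=
    Finite.of_injective (fun b => ((Quotient.mk'' (1:G) : G ⧸ K), b))
      (fun a b hab => (Prod.mk.injEq _ _ _ _ ▸ hab).2)
  haveI : Fintype (K ⧸ H.subgroupOf K) := Fintype.ofFinite _
  -- Step A: reduce to the stabilizer
  have hsum1 : ∑ q : G ⧸ H, qf G p v H hH q
      = ∑ x : (G ⧸ K) × (K ⧸ H.subgroupOf K), qf G p v K le_rfl x.1 := by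
    refine Fintype.sum_equiv e _ _ ?_
    intro q
    induction q using Quotient.inductionOn' with
    | h g => rfl
  have hcard1 : Fintype.card (G ⧸ H)
      = Fintype.card (G ⧸ K) * Fintype.card (K ⧸ H.subgroupOf K) := by
    rw [Fintype.card_congr e, Fintype.card_prod]
  have hsum2 : ∑ x : (G ⧸ K) × (K ⧸ H.subgroupOf K), qf G p v K le_rfl x.1
      = Fintype.card (K ⧸ H.subgroupOf K) • ∑ a : G ⧸ K, qf G p v K le_rfl a := by
    rw [Fintype.sum_prod_type, Finset.smul_sum]
    exact Finset.sum_congr rfl fun a _ => by simp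
  -- Step B: identify the stabilizer quotient sum with the orbit sum
  have horb : Fintype (orbit G v) := hv.fintype
  let e2 : {x // x ∈ hv.toFinset} ≃ orbit G v :=
    Equiv.subtypeEquivRight (fun x => hv.mem_toFinset)
  let e3 : {x // x ∈ hv.toFinset} ≃ G ⧸ K := e2.trans (orbitEquivQuotientStabilizer G v)
  have hsum3 : ∑ a : G ⧸ K, qf G p v K le_rfl a = ∑ w ∈ hv.toFinset, p w := by
    rw [← Finset.sum_coe_sort hv.toFinset (fun w => p w)]
    refine Fintype.sum_equiv e3.symm _ _ ?_
    intro a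
    induction a using Quotient.inductionOn' with
    | h g =>
      have : ((e3.symm (Quotient.mk'' g) : {x // x ∈ hv.toFinset})) =
          e2.symm ((orbitEquivQuotientStabilizer G v).symm (Quotient.mk'' g)) := rfl
      have hval : ((e3.symm (Quotient.mk'' g) : {x // x ∈ hv.toFinset}) : V) = g • v := by
        rw [this]
        exact orbitEquivQuotientStabilizer_symm_apply G v g
      rw [qf_mk]
      rw [hval]
  have hcard3 : hv.toFinset.card = Fintype.card (G ⧸ K) := by
    rw [← Fintype.card_coe, Fintype.card_congr e3]
  -- put it together
  have hne : (Fintype.card (K ⧸ H.subgroupOf K) : ℝ) ≠ 0 := by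
    exact_mod_cast Fintype.card_ne_zero
  rw [hsum1, hsum2, hcard1, hsum3, hcard3]
  rw [← Nat.cast_smul_eq_nsmul ℝ, smul_smul, Nat.cast_mul, mul_inv, mul_assoc,
    inv_mul_cancel₀ hne, mul_one]
end aux

/-- Averaging any linear projection `p : V → V^G` over the (finite) `G`-orbit of `v`
yields a linear map `p̄`. -/
theorem stmt1 {V : Type*} [AddCommGroup V] [Module ℝ V] [FiniteDimensional ℝ V]
    (G : Subgroup (V ≃ₗ[ℝ] V))
    (hfin : ∀ v : V, (Set.range fun g : G => (g : V ≃ₗ[ℝ] V) v).Finite)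
    (p : V →ₗ[ℝ] V)
    (hp_range : ∀ v : V, ∀ g ∈ G, g (p v) = p v)
    (hp_proj : ∀ v : V, (∀ g ∈ G, g v = v) → p v = v) :
    let pbar : V → V := fun v =>
      (((hfin v).toFinset.card : ℝ))⁻¹ • ∑ w ∈ (hfin v).toFinset, p w
    (∀ v₁ v₂ : V, pbar (v₁ + v₂) = pbar v₁ + pbar v₂) ∧
    (∀ (c : ℝ) (v : V), pbar (c • v) = c • pbar v) := by
  intro pbar
  have horb : ∀ v : V, (MulAction.orbit G v).Finite := fun v => hfin v
  haveI hQ : ∀ v : V, Finite (G ⧸ MulAction.stabilizer G v) := fun v => by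
    haveI := (horb v).to_subtype
    exact Finite.of_equiv _ (MulAction.orbitEquivQuotientStabilizer G v)
  constructor
  · intro v₁ v₂
    haveI := hQ v₁; haveI := hQ v₂; haveI := hQ (v₁ + v₂)
    haveI h1 : (MulAction.stabilizer G v₁).FiniteIndex :=
      Subgroup.finiteIndex_of_finite_quotient
    haveI h2 : (MulAction.stabilizer G v₂).FiniteIndex :=
      Subgroup.finiteIndex_of_finite_quotient
    haveI h12 : (MulAction.stabilizer G (v₁ + v₂)).FiniteIndex :=
      Subgroup.finiteIndex_of_finite_quotient
    set H := MulAction.stabilizer G v₁ ⊓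
      (MulAction.stabilizer G v₂ ⊓ MulAction.stabilizer G (v₁ + v₂)) with hHdef
    haveI : H.FiniteIndex := by infer_instance
    haveI : Finite (G ⧸ H) := Subgroup.finite_quotient_of_finiteIndex
    haveI : Fintype (G ⧸ H) := Fintype.ofFinite _
    haveI : Fintype (G ⧸ MulAction.stabilizer G v₁) := Fintype.ofFinite _
    haveI : Fintype (G ⧸ MulAction.stabilizer G v₂) := Fintype.ofFinite _
    haveI : Fintype (G ⧸ MulAction.stabilizer G (v₁ + v₂)) := Fintype.ofFinite _
    have hH1 : H ≤ MulAction.stabilizer G v₁ := inf_le_left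
    have hH2 : H ≤ MulAction.stabilizer G v₂ := le_trans inf_le_right inf_le_left
    have hH12 : H ≤ MulAction.stabilizer G (v₁ + v₂) := le_trans inf_le_right inf_le_right
    have e1 : _ = (((hfin v₁).toFinset.card : ℝ))⁻¹ • ∑ w ∈ (hfin v₁).toFinset, p w :=
      avg_eq G p v₁ (hfin v₁) H hH1
    have e2 : _ = (((hfin v₂).toFinset.card : ℝ))⁻¹ • ∑ w ∈ (hfin v₂).toFinset, p w :=
      avg_eq G p v₂ (hfin v₂) H hH2
    have e12 : _ = (((hfin (v₁ + v₂)).toFinset.card : ℝ))⁻¹ • ∑ w ∈ (hfin (v₁ + v₂)).toFinset, p w :=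
      avg_eq G p (v₁ + v₂) (hfin (v₁ + v₂)) H hH12
    have hsplit : ∀ q : G ⧸ H,
        qf G p (v₁ + v₂) H hH12 q = qf G p v₁ H hH1 q + qf G p v₂ H hH2 q := by
      intro q
      induction q using Quotient.inductionOn' with
      | h g => simp [qf_mk, smul_add]
    show (((hfin (v₁ + v₂)).toFinset.card : ℝ))⁻¹ • ∑ w ∈ (hfin (v₁ + v₂)).toFinset, p w
      = (((hfin v₁).toFinset.card : ℝ))⁻¹ • ∑ w ∈ (hfin v₁).toFinset, p w
        + (((hfin v₂).toFinset.card : ℝ))⁻¹ • ∑ w ∈ (hfin v₂).toFinset, p w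
    rw [← e1, ← e2, ← e12]
    rw [Finset.sum_congr rfl (fun q _ => hsplit q), Finset.sum_add_distrib, smul_add]
  · intro c v
    classical
    rcases eq_or_ne c 0 with rfl | hc
    · have h0 : (hfin ((0:ℝ) • v)).toFinset = {0} := by
        ext x
        simp only [Set.Finite.mem_toFinset, Set.mem_range, Finset.mem_singleton]
        constructor
        · rintro ⟨g, rfl⟩; simp
        · rintro rfl; exact ⟨1, by simp⟩
      show ((hfin ((0:ℝ) • v)).toFinset.card : ℝ)⁻¹ •
          ∑ w ∈ (hfin ((0:ℝ) • v)).toFinset, p w = (0:ℝ) • pbar v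
      rw [h0]
      simp
    · have himg : (hfin (c • v)).toFinset = (hfin v).toFinset.image (fun w => c • w) := by
        ext x
        simp only [Set.Finite.mem_toFinset, Set.mem_range, Finset.mem_image]
        constructor
        · rintro ⟨g, rfl⟩
          exact ⟨(g : V ≃ₗ[ℝ] V) v, ⟨g, rfl⟩, by simp [map_smul]⟩
        · rintro ⟨w, ⟨g, rfl⟩, rfl⟩
          exact ⟨g, by simp [map_smul]⟩
      have hinj : Function.Injective (fun w : V => c • w) :=
        smul_right_injective V hc
      show (((hfin (c • v)).toFinset.card : ℝ))⁻¹ • ∑ w ∈ (hfin (c • v)).toFinset, p w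
        = c • ((((hfin v).toFinset.card : ℝ))⁻¹ • ∑ w ∈ (hfin v).toFinset, p w)
      rw [himg, Finset.card_image_of_injective _ hinj,
        Finset.sum_image (fun a _ b _ h => hinj h)]
      simp only [map_smul]
      rw [← Finset.smul_sum, smul_comm]
end

section
/- Let V be a real inner product space (positive definite symmetric bilinear form ⟨·,·⟩) of finite dimension, and let 𝒜 ⊆ V be an open convex cone that is self-dual: 𝒜 = {v ∈ V | ∀ a ∈ closure(𝒜) \ {0}, ⟨v, a⟩ > 0}. Let G be a group of linear isometries of V preserving 𝒜. Then the invariant cone 𝒜^G = 𝒜 ∩ V^G is self-dual in V^G with respect to the restricted inner product, provided 𝒜^G is nonempty: 𝒜^G = {v ∈ V^G | ∀ a ∈ closure(𝒜^G) \ {0}, ⟨v, a⟩ > 0}. -/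
/-- Let `A` be an open convex self-dual cone in a finite-dimensional real inner ℝ product
space `V`, and let `G` be a group of linear isometries of `V` preserving `A`. If the
invariant cone `A ∩ V^G` is nonempty, then it is self-dual in `V^G` with respect to the
restricted inner ℝ product. -/
theorem stmt18 {V : Type*} [NormedAddCommGroup V] [InnerProductSpace ℝ V]
    [FiniteDimensional ℝ V]
    (A : Set V) (hopen : IsOpen A)
    (hadd : ∀ a ∈ A, ∀ b ∈ A, a + b ∈ A)
    (hsmul : ∀ (c : ℝ), 0 < c → ∀ a ∈ A, c • a ∈ A)
    (hsd : A = {v : V | ∀ a ∈ closure A, a ≠ 0 → 0 < (inner ℝ v a : ℝ)})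
    (G : Subgroup (V ≃ₗᵢ[ℝ] V))
    (hGA : ∀ g ∈ G, ∀ a ∈ A, g a ∈ A)
    (hne : (A ∩ {v : V | ∀ g ∈ G, g v = v}).Nonempty) :
    A ∩ {v : V | ∀ g ∈ G, g v = v} =
      {v ∈ {v : V | ∀ g ∈ G, g v = v} |
        ∀ a ∈ closure (A ∩ {v : V | ∀ g ∈ G, g v = v}), a ≠ 0 →
          0 < (inner ℝ v a : ℝ)} := by
  obtain ⟨w, hwA, hwW⟩ := hne
  set W : Set V := {v : V | ∀ g ∈ G, g v = v} with hWdef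
  -- A is convex
  have hconvA : Convex ℝ A := by
    intro x hx y hy a b ha hb hab
    rcases ha.eq_or_lt with ha0 | ha0
    · have hb1 : b = 1 := by linarith
      subst hb1; rw [← ha0]; simpa using hy
    rcases hb.eq_or_lt with hb0 | hb0
    · have ha1 : a = 1 := by linarith
      subst ha1; rw [← hb0]; simpa using hx
    exact hadd _ (hsmul a ha0 x hx) _ (hsmul b hb0 y hy)
  -- closure A + A ⊆ A
  have hclA : ∀ x ∈ closure A, ∀ y ∈ A, x + y ∈ A := by
    intro x hx y hy
    obtain ⟨ε, hε, hball⟩ := Metric.isOpen_iff.1 hopen y hy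
    obtain ⟨x', hx'A, hx'd⟩ := Metric.mem_closure_iff.1 hx ε hε
    have : y + (x - x') ∈ A := by
      apply hball
      simp only [Metric.mem_ball, dist_eq_norm]
      simpa [dist_eq_norm] using hx'd
    have := hadd x' hx'A _ this
    convert this using 1
    abel
  -- closure A ∩ W ⊆ closure (A ∩ W)
  have hkey : closure A ∩ W ⊆ closure (A ∩ W) := by
    rintro x ⟨hxA, hxW⟩
    rw [Metric.mem_closure_iff]
    intro ε hε
    set t : ℝ := ε / (‖w‖ + 1) with ht
    have hwpos : (0:ℝ) < ‖w‖ + 1 := by positivity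
    have htpos : 0 < t := div_pos hε hwpos
    refine ⟨x + t • w, ⟨hclA x hxA _ (hsmul t htpos w hwA), ?_⟩, ?_⟩
    · intro g hg
      have hgx := hxW g hg
      have hgw := hwW g hg
      simp [map_add, map_smul, hgx, hgw]
    · have : dist x (x + t • w) = t * ‖w‖ := by
        rw [dist_eq_norm]
        simp [norm_smul, abs_of_pos htpos]
      rw [this, ht]
      calc ε / (‖w‖ + 1) * ‖w‖ < ε / (‖w‖ + 1) * (‖w‖ + 1) := by
            apply mul_lt_mul_of_pos_left (by linarith) htpos
        _ = ε := div_mul_cancel₀ ε (by positivity)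
  ext v
  constructor
  · rintro ⟨hvA, hvW⟩
    refine ⟨hvW, fun a ha ha0 => ?_⟩
    have : a ∈ closure A := closure_mono Set.inter_subset_left ha
    exact (hsd ▸ hvA) a this ha0
  · rintro ⟨hvW, hvpos⟩
    refine ⟨?_, hvW⟩
    rw [hsd]
    intro b hb hb0
    -- the orbit of b
    set S : Set V := {x | ∃ g ∈ G, (g : V ≃ₗᵢ[ℝ] V) b = x} with hSdef
    set C : Set V := closure (convexHull ℝ S) with hCdef
    have hbS : b ∈ S := ⟨1, one_mem G, rfl⟩
    have hbC : b ∈ C := subset_closure (subset_convexHull ℝ S hbS)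
    have hCclosed : IsClosed C := isClosed_closure
    have hCconv : Convex ℝ C := (convex_convexHull ℝ S).closure
    -- C ⊆ closure A
    have hCA : C ⊆ closure A := by
      apply closure_minimal (convexHull_min ?_ hconvA.closure) isClosed_closure
      rintro x ⟨g, hg, rfl⟩
      have : (g : V ≃ₗᵢ[ℝ] V) '' closure A ⊆ closure A := by
        refine (image_closure_subset_closure_image g.continuous).trans ?_
        apply closure_mono
        rintro y ⟨z, hz, rfl⟩
        exact hGA g hg z hz
      exact this ⟨b, hb, rfl⟩
    -- for u fixed by G : C ⊆ {x | ⟪u, x⟫ = ⟪u, b⟫}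
    have hplane : ∀ u : V, u ∈ W → ∀ x ∈ C, (inner ℝ u x : ℝ) = inner ℝ u b := by
      intro u hu
      have hconvP : Convex ℝ {x : V | (inner ℝ u x : ℝ) = inner ℝ u b} :=
        convex_hyperplane ⟨fun x y => inner_add_right u x y,
          fun c x => real_inner_smul_right u x c⟩ _
      have hclP : IsClosed {x : V | (inner ℝ u x : ℝ) = inner ℝ u b} :=
        isClosed_eq (Continuous.inner continuous_const continuous_id) continuous_const
      intro x hx
      refine closure_minimal (convexHull_min ?_ hconvP) hclP hx
      rintro y ⟨g, hg, rfl⟩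
      have h1 : (g : V ≃ₗᵢ[ℝ] V) (g⁻¹ u) = u := (g : V ≃ₗᵢ[ℝ] V).apply_symm_apply u
      have h2 : ((g⁻¹ : V ≃ₗᵢ[ℝ] V)) u = u := hu g⁻¹ (inv_mem hg)
      calc (inner ℝ u ((g : V ≃ₗᵢ[ℝ] V) b) : ℝ)
          = inner ℝ ((g : V ≃ₗᵢ[ℝ] V) ((g⁻¹ : V ≃ₗᵢ[ℝ] V) u)) ((g : V ≃ₗᵢ[ℝ] V) b) := by
            rw [h1]
        _ = inner ℝ ((g⁻¹ : V ≃ₗᵢ[ℝ] V) u) b := (g : V ≃ₗᵢ[ℝ] V).inner_map_map _ _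
        _ = inner ℝ u b := by rw [h2]
    -- minimal norm point of C
    obtain ⟨c, hcC, hcd⟩ := hCclosed.exists_infDist_eq_dist ⟨b, hbC⟩ 0
    have hmin : ∀ y ∈ C, ‖c‖ ≤ ‖y‖ := by
      intro y hy
      have h1 := Metric.infDist_le_dist_of_mem (x := (0:V)) hy
      rw [hcd] at h1
      simpa [dist_zero_left] using h1
    -- c is fixed by G
    have hcW : c ∈ W := by
      intro g hg
      set d := (g : V ≃ₗᵢ[ℝ] V) c with hd
      have hdC : d ∈ C := by
        have hpre : C ⊆ (g : V ≃ₗᵢ[ℝ] V) ⁻¹' C := by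
          apply closure_minimal (convexHull_min ?_ ?_) (hCclosed.preimage g.continuous)
          · rintro x ⟨g', hg', rfl⟩
            exact subset_closure (subset_convexHull ℝ S ⟨g * g', mul_mem hg hg', rfl⟩)
          · exact hCconv.linear_preimage (g : V ≃ₗᵢ[ℝ] V).toLinearEquiv.toLinearMap
        exact hpre hcC
      have hnd : ‖d‖ = ‖c‖ := (g : V ≃ₗᵢ[ℝ] V).norm_map c
      have hmC : (1/2 : ℝ) • c + (1/2 : ℝ) • d ∈ C :=
        hCconv hcC hdC (by norm_num) (by norm_num) (by norm_num)
      have hm := hmin _ hmC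
      have h1 : ‖c + d‖ ^ 2 = ‖c‖^2 + 2 * inner ℝ c d + ‖d‖^2 := norm_add_sq_real c d
      have h2 : ‖c - d‖ ^ 2 = ‖c‖^2 - 2 * inner ℝ c d + ‖d‖^2 := norm_sub_sq_real c d
      have h3 : (1/2 : ℝ) • c + (1/2 : ℝ) • d = (1/2 : ℝ) • (c + d) := by
        rw [smul_add]
      have h4 : ‖(1/2 : ℝ) • (c + d)‖ = (1/2) * ‖c + d‖ := by
        rw [norm_smul]; norm_num
      rw [h3, h4] at hm
      have h5 : ‖c - d‖ ^ 2 ≤ 0 := by nlinarith [norm_nonneg (c + d), norm_nonneg c]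
      have h6 : c - d = 0 := by
        have := sq_nonneg ‖c - d‖
        have : ‖c - d‖ = 0 := by nlinarith
        exact norm_eq_zero.1 this
      have : d = c := by
        have := sub_eq_zero.1 h6; exact this.symm
      exact this
    -- c ≠ 0 using w
    have hwb : (0:ℝ) < inner ℝ w b := (hsd ▸ hwA) b hb hb0
    have hwc : (inner ℝ w c : ℝ) = inner ℝ w b := hplane w hwW c hcC
    have hc0 : c ≠ 0 := by
      intro h
      rw [h, inner_zero_right] at hwc
      linarith [hwb, hwc]
    -- conclude
    have hcAW : c ∈ closure (A ∩ W) := hkey ⟨hCA hcC, hcW⟩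
    have hvc : (inner ℝ v c : ℝ) = inner ℝ v b := hplane v hvW c hcC
    have := hvpos c hcAW hc0
    linarith [this, hvc]
end
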